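/- For every profile of strict preferences and every ordering of the agents, the discrete assignment produced by the priority (serial dictator) rule is SD-efficient: no random assignment q satisfies q(i) ≿_i^SD p(i) for all agents i with q(j) ≻_j^SD p(j) for some agent j, where p is the priority outcome. -/

import Mathlib

open Finset
open scoped Classical

/-- A (binary-relation) preference over `m` objects; `R a b` means `a ≿ b`. -/
abbrev Pref (m : ℕ) := Fin m → Fin m → Prop

/-- A strict (linear) preference: reflexive, transitive, antisymmetric and total
weak relation `≿`, i.e. a linear order on the objects. -/
def IsStrictPref {m : ℕ} (R : Pref m) : Prop :=
  (∀ a, R a a) ∧ (∀ a b c, R a b → R b c → R a c) ∧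
  (∀ a b, R a b → R b a → a = b) ∧ (∀ a b, R a b ∨ R b a)

/-- A profile of strict preferences, one for each agent. -/
def ValidProfile {n m : ℕ} (pref : Fin n → Pref m) : Prop :=
  ∀ i, IsStrictPref (pref i)

/-- `x` (first-order) stochastically dominates `y` w.r.t. preference `R`:
for every object `o`, the total mass on objects weakly preferred to `o`
under `x` is at least that under `y`. -/
def sdPrefers {m : ℕ} (R : Pref m) (x y : Fin m → ℝ) : Prop :=
  ∀ o : Fin m,
    ∑ o' ∈ univ.filter (fun o' => R o' o), x o' ≥
    ∑ o' ∈ univ.filter (fun o' => R o' o), y o'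

/-- Strict stochastic dominance. -/
def sdStrict {m : ℕ} (R : Pref m) (x y : Fin m → ℝ) : Prop :=
  sdPrefers R x y ∧ ¬ sdPrefers R y x

/-- Strict downward-lexicographic (DL) preference of `x` over `y`:
at the most preferred object where they differ, `x` gives more. -/
def dlStrict {m : ℕ} (R : Pref m) (x y : Fin m → ℝ) : Prop :=
  ∃ o : Fin m, x o > y o ∧ ∀ o', x o' ≠ y o' → R o o'

/-- Weak DL preference. -/
def dlPrefers {m : ℕ} (R : Pref m) (x y : Fin m → ℝ) : Prop :=
  x = y ∨ dlStrict R x y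

/-- A random assignment: entries in `[0,1]`, every object fully allocated
(column sums `1`), every agent receiving `c` units (row sums `c`). -/
def IsRandomAssignment (n m c : ℕ) (p : Fin n → Fin m → ℝ) : Prop :=
  (∀ i o, 0 ≤ p i o ∧ p i o ≤ 1) ∧
  (∀ o, ∑ i, p i o = 1) ∧
  (∀ i, ∑ o, p i o = (c : ℝ))

/-- A discrete (0/1) matrix. -/
def IsDiscreteAssign (n m : ℕ) (p : Fin n → Fin m → ℝ) : Prop :=
  ∀ i o, p i o = 0 ∨ p i o = 1

/-- `p` is SD-efficient at profile `pref`: no random assignment `q` weakly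
SD-dominates it for everyone and strictly for someone. -/
def SDEfficientAssignment (n m c : ℕ) (pref : Fin n → Pref m)
    (p : Fin n → Fin m → ℝ) : Prop :=
  ¬ ∃ q : Fin n → Fin m → ℝ, IsRandomAssignment n m c q ∧
      (∀ i, sdPrefers (pref i) (q i) (p i)) ∧
      ∃ j, sdStrict (pref j) (q j) (p j)

/-- Anonymity of an assignment rule: permuting the agents' reports permutes
their allocations accordingly. -/
def Anonymous (n m : ℕ) (f : (Fin n → Pref m) → Fin n → Fin m → ℝ) : Prop :=
  ∀ (pref : Fin n → Pref m) (σ : Equiv.Perm (Fin n)), ValidProfile pref →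
    ∀ i, f (fun j => pref (σ j)) i = f pref (σ i)

/-- Neutrality of an assignment rule: relabelling the objects (in all
preferences) relabels the returned assignment accordingly. -/
def Neutral (n m : ℕ) (f : (Fin n → Pref m) → Fin n → Fin m → ℝ) : Prop :=
  ∀ (pref : Fin n → Pref m) (τ : Equiv.Perm (Fin m)), ValidProfile pref →
    ∀ i o, f (fun j a b => pref j (τ.symm a) (τ.symm b)) i o = f pref i (τ.symm o)

/-- Weak SD-strategyproofness: no agent can misreport and obtain an allocation
he strictly SD-prefers (w.r.t. his true preference). -/
def WeakSDSP (n m : ℕ) (f : (Fin n → Pref m) → Fin n → Fin m → ℝ) : Prop :=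
  ¬ ∃ (pref : Fin n → Pref m) (i : Fin n) (R' : Pref m),
      ValidProfile pref ∧ IsStrictPref R' ∧
      sdStrict (pref i) (f (Function.update pref i R') i) (f pref i)

/-- Weak SD group-strategyproofness: no nonempty coalition can jointly
misreport so that every member strictly SD-prefers the new allocation. -/
def WeakSDGroupSP (n m : ℕ) (f : (Fin n → Pref m) → Fin n → Fin m → ℝ) : Prop :=
  ¬ ∃ (pref pref' : Fin n → Pref m) (S : Finset (Fin n)),
      ValidProfile pref ∧ S.Nonempty ∧
      (∀ i ∈ S, IsStrictPref (pref' i)) ∧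
      (∀ i ∉ S, pref' i = pref i) ∧
      ∀ i ∈ S, sdStrict (pref i) (f pref' i) (f pref i)

/-- DL-strategyproofness: truth-telling always yields a weakly DL-preferred
allocation. -/
def DLSP (n m : ℕ) (f : (Fin n → Pref m) → Fin n → Fin m → ℝ) : Prop :=
  ∀ (pref : Fin n → Pref m) (i : Fin n) (R' : Pref m),
    ValidProfile pref → IsStrictPref R' →
    dlPrefers (pref i) (f pref i) (f (Function.update pref i R') i)

/-- The set of the `c` most preferred objects under the strict preference `R`:
objects having at most `c` objects weakly preferred to them. -/
noncomputable def topSet (m c : ℕ) (R : Pref m) : Finset (Fin m) :=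
  univ.filter (fun o => (univ.filter (fun o' => R o' o)).card ≤ c)

/-- A perfect assignment: every agent receives each of his `c` most preferred
objects with probability `1`. -/
def PerfectAssignment (n m c : ℕ) (pref : Fin n → Pref m) (p : Fin n → Fin m → ℝ) : Prop :=
  ∀ i, ∀ o ∈ topSet m c (pref i), p i o = 1

/-- Ex post efficiency: `p` is a convex combination of SD-efficient discrete
assignments. -/
def ExPostEfficient (n m c : ℕ) (pref : Fin n → Pref m)
    (p : Fin n → Fin m → ℝ) : Prop :=
  ∃ (k : ℕ) (w : Fin k → ℝ) (d : Fin k → Fin n → Fin m → ℝ),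
    (∀ j, 0 ≤ w j) ∧ (∑ j, w j = 1) ∧
    (∀ j, IsDiscreteAssign n m (d j) ∧ IsRandomAssignment n m c (d j) ∧
          SDEfficientAssignment n m c pref (d j)) ∧
    (∀ i o, p i o = ∑ j, w j * d j i o)

/-- A (possibly unbalanced) 0/1 allocation matrix: 0/1 entries, every object
assigned to exactly one agent. -/
def ZeroOneAlloc (n m : ℕ) (p : Fin n → Fin m → ℝ) : Prop :=
  (∀ i o, p i o = 0 ∨ p i o = 1) ∧ (∀ o, ∑ i, p i o = 1)

/-- Pareto optimality among 0/1 allocation matrices (w.r.t. SD comparisons). -/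
def ParetoOptAlloc (n m : ℕ) (pref : Fin n → Pref m)
    (p : Fin n → Fin m → ℝ) : Prop :=
  ZeroOneAlloc n m p ∧
  ¬ ∃ q : Fin n → Fin m → ℝ, ZeroOneAlloc n m q ∧
      (∀ i, sdPrefers (pref i) (q i) (p i)) ∧
      ∃ j, sdStrict (pref j) (q j) (p j)

/-- `p` is the outcome of the priority (serial dictator) rule for the agent
ordering `σ`: it is a discrete assignment in which, sequentially, agent
`σ k` receives his `c` most preferred objects among those not taken by the
earlier agents `σ 0, …, σ (k-1)`. -/
def PriorityOutcome (n m c : ℕ) (pref : Fin n → Pref m) (σ : Equiv.Perm (Fin n))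
    (p : Fin n → Fin m → ℝ) : Prop :=
  IsDiscreteAssign n m p ∧ IsRandomAssignment n m c p ∧
  ∀ (k : Fin n) (o : Fin m), (∀ j, j < k → p (σ j) o ≠ 1) →
    (p (σ k) o = 1 ↔
      (univ.filter (fun o' => (∀ j, j < k → p (σ j) o' ≠ 1) ∧ pref (σ k) o' o)).card ≤ c)

/-- The strict preference induced by a ranking function (smaller rank =
more preferred). -/
def prefOfRank {m : ℕ} (r : Fin m → ℕ) : Pref m := fun a b => r a ≤ r b

/-! Let `q` weakly SD-dominate the priority outcome `p` for every agent. Along the priority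
order, each agent `σ k` gets under `q` every object `o` he gets under `p`: an object he ranks
above `o` but does not get under `p` was taken by an earlier agent, who by induction keeps it
entirely under `q`; so the upper contour set of `o` carries no more `q`-mass than `p`-mass on
the objects `σ k` gets, and SD-dominance forces `q = 1` there. As rows sum to `c` in both
assignments, `q = p`, so no agent's dominance is strict. -/

theorem IsStrictPref.isPreorder {m : ℕ} {R : Pref m} (hR : IsStrictPref R) :
    IsPreorder (Fin m) R where
  refl := hR.1
  trans := hR.2.1

theorem eqOn_of_forall_le_of_sum_le {ι : Type*} {s : Finset ι} {f g : ι → ℝ}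
    (hle : ∀ i ∈ s, f i ≤ g i) (hsum : ∑ i ∈ s, g i ≤ ∑ i ∈ s, f i) :
    ∀ i ∈ s, f i = g i :=
  (Finset.sum_eq_sum_iff_of_le hle).1 (le_antisymm (Finset.sum_le_sum hle) hsum)

theorem eq_zero_of_eq_one_of_sum_eq_one {ι : Type*} [Fintype ι] {f : ι → ℝ}
    (hf : ∀ i, 0 ≤ f i) (hsum : ∑ i, f i = 1) {i j : ι} (hi : f i = 1) (hji : j ≠ i) :
    f j = 0 := by
  have hrest : ∑ k ∈ univ.erase i, f k = 0 := by
    linarith [Finset.add_sum_erase univ f (mem_univ i)]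
  exact (Finset.sum_eq_zero_iff_of_nonneg fun k _ => hf k).1 hrest j (mem_erase.2 ⟨hji, mem_univ j⟩)

theorem IsRandomAssignment.eq_zero_of_eq_one {n m c : ℕ} {q : Fin n → Fin m → ℝ}
    (hq : IsRandomAssignment n m c q) {i j : Fin n} {o : Fin m} (hi : q i o = 1) (hji : j ≠ i) :
    q j o = 0 :=
  eq_zero_of_eq_one_of_sum_eq_one (fun k => (hq.1 k o).1) (hq.2.1 o) hi hji

theorem IsRandomAssignment.eq_of_forall_eq_one {n m c : ℕ} {p q : Fin n → Fin m → ℝ}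
    (hp : IsRandomAssignment n m c p) (hq : IsRandomAssignment n m c q)
    (hdisc : IsDiscreteAssign n m p) (hpq : ∀ i o, p i o = 1 → q i o = 1) : q = p := by
  funext i o
  have hle : ∀ o ∈ univ, p i o ≤ q i o := fun o _ => by
    rcases hdisc i o with h | h
    · exact h ▸ (hq.1 i o).1
    · exact (hpq i o h).symm ▸ h.le
  exact (eqOn_of_forall_le_of_sum_le hle (by rw [hp.2.2 i, hq.2.2 i]) o (mem_univ o)).symm

namespace PriorityOutcome

variable {n m c : ℕ} {pref : Fin n → Pref m} {σ : Equiv.Perm (Fin n)} {p : Fin n → Fin m → ℝ}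

theorem ne_one_of_lt (hp : PriorityOutcome n m c pref σ p) {k j : Fin n} {o : Fin m}
    (hk : p (σ k) o = 1) (hjk : j < k) : p (σ j) o ≠ 1 := by
  rw [hp.2.1.eq_zero_of_eq_one hk (σ.injective.ne hjk.ne)]
  exact zero_ne_one

theorem eq_one_of_pref_of_available (hp : PriorityOutcome n m c pref σ p) {k : Fin n}
    [IsTrans (Fin m) (pref (σ k))] {o o' : Fin m} (hk : p (σ k) o = 1) (ho' : pref (σ k) o' o)
    (havail : ∀ j < k, p (σ j) o' ≠ 1) : p (σ k) o' = 1 := by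
  have hcard := (hp.2.2 k o fun j hjk => hp.ne_one_of_lt hk hjk).1 hk
  refine (hp.2.2 k o' havail).2 (le_trans (card_le_card fun x hx => ?_) hcard)
  simp only [mem_filter, mem_univ, true_and] at hx ⊢
  exact ⟨hx.1, _root_.trans hx.2 ho'⟩

theorem eq_one_of_sdPrefers (hp : PriorityOutcome n m c pref σ p)
    (hpref : ∀ i, IsPreorder (Fin m) (pref i)) {q : Fin n → Fin m → ℝ}
    (hq : IsRandomAssignment n m c q) (hdom : ∀ i, sdPrefers (pref i) (q i) (p i))
    (k : Fin n) : ∀ o, p (σ k) o = 1 → q (σ k) o = 1 := by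
  induction k using WellFoundedLT.induction with
  | ind k ih =>
    intro o hk
    have hle : ∀ o' ∈ univ.filter (pref (σ k) · o), q (σ k) o' ≤ p (σ k) o' := by
      intro o' ho'
      rcases hp.1 (σ k) o' with h0 | h1
      · -- `o'` must have gone to an earlier agent, who keeps it under `q`
        have htaken : ∃ j < k, p (σ j) o' = 1 := by
          by_contra! havail
          have := hp.eq_one_of_pref_of_available hk (mem_filter.1 ho').2 havail
          linarith
        obtain ⟨j, hjk, hj⟩ := htaken
        rw [h0, hq.eq_zero_of_eq_one (ih j hjk o' hj) (σ.injective.ne hjk.ne')]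
      · exact h1 ▸ (hq.1 (σ k) o').2
    have ho : o ∈ univ.filter (pref (σ k) · o) := mem_filter.2 ⟨mem_univ o, refl o⟩
    rw [← hk]
    exact eqOn_of_forall_le_of_sum_le hle (hdom (σ k) o) o ho

theorem eq_of_sdPrefers (hp : PriorityOutcome n m c pref σ p)
    (hpref : ∀ i, IsPreorder (Fin m) (pref i)) {q : Fin n → Fin m → ℝ}
    (hq : IsRandomAssignment n m c q) (hdom : ∀ i, sdPrefers (pref i) (q i) (p i)) : q = p :=
  hp.2.1.eq_of_forall_eq_one hq hp.1 fun i o =>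
    σ.apply_symm_apply i ▸ hp.eq_one_of_sdPrefers hpref hq hdom (σ.symm i) o

end PriorityOutcome

/-- For every profile of strict preferences and every
ordering of the agents, the discrete assignment produced by the priority
(serial dictator) rule is SD-efficient. -/
theorem priority_outcome_sdEfficient (n c : ℕ)
    (pref : Fin n → Pref (n * c)) (hpref : ValidProfile pref)
    (σ : Equiv.Perm (Fin n)) (p : Fin n → Fin (n * c) → ℝ)
    (hp : PriorityOutcome n (n * c) c pref σ p) :
    SDEfficientAssignment n (n * c) c pref p := by
  rintro ⟨q, hq, hdom, j, -, hnot⟩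
  obtain rfl := hp.eq_of_sdPrefers (fun i => (hpref i).isPreorder) hq hdom
  exact hnot fun _ => le_rfl
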